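/- Let n ≥ 1, let α be a string, and let P be a set of strings such that there is no n-good tree from α for P. If V is an n-good tree from α, then there exists a string β extending an element of V such that there is no n-good tree from β for P; moreover, β can be chosen to be an element of V itself. -/

import Mathlib

/-- A *tree*: a finite set of pairwise incomparable strings (antichain under
the prefix/extension order), where a string is a finite sequence of naturals. -/
def IsTree (T : Finset (List ℕ)) : Prop :=
  ∀ σ ∈ T, ∀ τ ∈ T, σ <+: τ → σ = τ

/-- `T` is `a`-good from `σ`: `T` is nonempty, every string in `T` extends `σ`,
and for every `τ` with `σ ⊆ τ ⊊ ρ` for some `ρ ∈ T`, at least `a` immediate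
successors `τ*k` of `τ` are initial segments of elements of `T`. -/
def GoodFrom (a : ℕ) (T : Finset (List ℕ)) (σ : List ℕ) : Prop :=
  T.Nonempty ∧ (∀ ρ ∈ T, σ <+: ρ) ∧
    ∀ τ : List ℕ, (∃ ρ ∈ T, σ <+: τ ∧ τ <+: ρ ∧ τ ≠ ρ) →
      a ≤ {k : ℕ | ∃ ρ ∈ T, τ ++ [k] <+: ρ}.ncard

/-- `T` is `a`-good from `σ` for `P`: in addition `T ⊆ P`. -/
def GoodFromFor (a : ℕ) (T : Finset (List ℕ)) (σ : List ℕ) (P : Set (List ℕ)) : Prop :=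
  GoodFrom a T σ ∧ ↑T ⊆ P

/-!
Suppose every `β ∈ V` carried an `n`-good tree `S β` from `β` for `P`. Grafting these trees onto
the leaves of `V` yields `⋃ β ∈ V, S β`: it is still an antichain because `V` is, every node below
a leaf of `V` branches as in `V`, and every node above a leaf `β` branches as in `S β`. This is an
`n`-good tree from `α` for `P`, which does not exist.
-/

lemma finite_setOf_append_singleton_prefix (S : Finset (List ℕ)) (τ : List ℕ) :
    {k : ℕ | ∃ ρ ∈ S, τ ++ [k] <+: ρ}.Finite := by
  apply (S.image (fun ρ => ρ.getD τ.length 0)).finite_toSet.subset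
  rintro k ⟨ρ, hρ, t, rfl⟩
  refine Finset.mem_image.2 ⟨τ ++ [k] ++ t, hρ, ?_⟩
  rw [List.append_assoc, List.getD_append_right _ _ _ _ le_rfl]
  simp

lemma ncard_setOf_append_singleton_prefix_le {T S : Finset (List ℕ)}
    (h : ∀ ρ ∈ T, ∃ ρ' ∈ S, ρ <+: ρ') (τ : List ℕ) :
    {k : ℕ | ∃ ρ ∈ T, τ ++ [k] <+: ρ}.ncard ≤ {k : ℕ | ∃ ρ ∈ S, τ ++ [k] <+: ρ}.ncard := by
  refine Set.ncard_le_ncard ?_ (finite_setOf_append_singleton_prefix S τ)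
  rintro k ⟨ρ, hρ, hk⟩
  obtain ⟨ρ', hρ', hρρ'⟩ := h ρ hρ
  exact ⟨ρ', hρ', hk.trans hρρ'⟩

section Graft

variable {V : Finset (List ℕ)} {f : List ℕ → Finset (List ℕ)}

lemma IsTree.biUnion (hV : IsTree V) (hf : ∀ β ∈ V, IsTree (f β))
    (hext : ∀ β ∈ V, ∀ ρ ∈ f β, β <+: ρ) : IsTree (V.biUnion f) := by
  intro σ hσ τ hτ hστ
  obtain ⟨β, hβ, hσβ⟩ := Finset.mem_biUnion.1 hσ
  obtain ⟨γ, hγ, hτγ⟩ := Finset.mem_biUnion.1 hτ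
  have hβγ : β = γ := by
    rcases List.prefix_or_prefix_of_prefix ((hext β hβ σ hσβ).trans hστ) (hext γ hγ τ hτγ)
      with h | h
    · exact hV β hβ γ hγ h
    · exact (hV γ hγ β hβ h).symm
  subst hβγ
  exact hf β hβ σ hσβ τ hτγ hστ

lemma GoodFrom.biUnion {a : ℕ} {α : List ℕ} (hV : GoodFrom a V α)
    (hf : ∀ β ∈ V, GoodFrom a (f β) β) : GoodFrom a (V.biUnion f) α := by
  have hext : ∀ β ∈ V, ∀ ρ ∈ f β, β <+: ρ := fun β hβ => (hf β hβ).2.1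
  refine ⟨?_, ?_, ?_⟩
  · obtain ⟨β, hβ⟩ := hV.1
    obtain ⟨ρ, hρ⟩ := (hf β hβ).1
    exact ⟨ρ, Finset.mem_biUnion.2 ⟨β, hβ, hρ⟩⟩
  · intro ρ hρ
    obtain ⟨β, hβ, hρβ⟩ := Finset.mem_biUnion.1 hρ
    exact (hV.2.1 β hβ).trans (hext β hβ ρ hρβ)
  · rintro τ ⟨ρ, hρ, hατ, hτρ, hτne⟩
    obtain ⟨β, hβ, hρβ⟩ := Finset.mem_biUnion.1 hρ
    by_cases hβτ : β <+: τ
    · refine ((hf β hβ).2.2 τ ⟨ρ, hρβ, hβτ, hτρ, hτne⟩).trans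
        (ncard_setOf_append_singleton_prefix_le (fun ρ' hρ' => ?_) τ)
      exact ⟨ρ', Finset.mem_biUnion.2 ⟨β, hβ, hρ'⟩, List.prefix_refl ρ'⟩
    · have hτβ : τ <+: β :=
        (List.prefix_or_prefix_of_prefix hτρ (hext β hβ ρ hρβ)).resolve_right hβτ
      refine (hV.2.2 τ ⟨β, hβ, hατ, hτβ, fun h => hβτ (h ▸ List.prefix_refl τ)⟩).trans
        (ncard_setOf_append_singleton_prefix_le (fun γ hγ => ?_) τ)
      obtain ⟨ρ', hρ'⟩ := (hf γ hγ).1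
      exact ⟨ρ', Finset.mem_biUnion.2 ⟨γ, hγ, hρ'⟩, hext γ hγ ρ' hρ'⟩

lemma GoodFromFor.biUnion {a : ℕ} {α : List ℕ} {P : Set (List ℕ)} (hV : GoodFrom a V α)
    (hf : ∀ β ∈ V, GoodFromFor a (f β) β P) : GoodFromFor a (V.biUnion f) α P := by
  refine ⟨hV.biUnion fun β hβ => (hf β hβ).1, ?_⟩
  intro ρ hρ
  obtain ⟨β, hβ, hρβ⟩ := Finset.mem_biUnion.1 (Finset.mem_coe.1 hρ)
  exact (hf β hβ).2 hρβ

end Graft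

theorem no_good_tree_from_element_general (n : ℕ) (α : List ℕ) (P : Set (List ℕ))
    (hP : ¬ ∃ S : Finset (List ℕ), IsTree S ∧ GoodFromFor n S α P)
    (V : Finset (List ℕ)) (hV : IsTree V) (hgood : GoodFrom n V α) :
    ∃ β ∈ V, (∃ v ∈ V, v <+: β) ∧
      ¬ ∃ S : Finset (List ℕ), IsTree S ∧ GoodFromFor n S β P := by
  by_contra! h
  have hgraft : ∀ β ∈ V, ∃ S : Finset (List ℕ), IsTree S ∧ GoodFromFor n S β P :=
    fun β hβ => h β hβ ⟨β, hβ, List.prefix_refl β⟩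
  choose! f hf_tree hf_good using hgraft
  exact hP ⟨V.biUnion f,
    hV.biUnion hf_tree fun β hβ => (hf_good β hβ).1.2.1,
    GoodFromFor.biUnion hgood hf_good⟩

/-- If there is no `n`-good tree from `α` for `P` and `V` is an `n`-good tree from `α`,
then some string `β` extending an element of `V` — indeed some `β ∈ V` itself — is such
that there is no `n`-good tree from `β` for `P`. -/
theorem no_good_tree_from_element (n : ℕ) (hn : 1 ≤ n) (α : List ℕ) (P : Set (List ℕ))
    (hP : ¬ ∃ S : Finset (List ℕ), IsTree S ∧ GoodFromFor n S α P)
    (V : Finset (List ℕ)) (hV : IsTree V) (hgood : GoodFrom n V α) :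
    ∃ β ∈ V, (∃ v ∈ V, v <+: β) ∧
      ¬ ∃ S : Finset (List ℕ), IsTree S ∧ GoodFromFor n S β P :=
  no_good_tree_from_element_general n α P hP V hV hgood
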